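/- arXiv:2503.08503 — 8 statements merged into one kernel-verified Lean document; each statement's English description precedes it below -/
import Mathlib

section
/- For every (x,y) ∈ ℝ², the partial derivative of G with respect to y exists and equals −U_P'(z)·g'(y) + c·U_P''(z)·g'(y)² − c·U_P'(z)·g''(y), where z = x − U_A⁻¹(y) and g = U_A⁻¹; moreover this partial derivative is strictly negative. (This is the claim L_y(x,y,T) < 0 of the paper's Lemma on the signs of L_x, L_y at the terminal time.) -/
/-!
Write `g = U_A⁻¹`. Since `U_A' ∘ g = 1 / g'`, the terminal value is
`G(x, y) = U_P(x − g y) − c · U_P'(x − g y) · g'(y)`, and the chain and product rules give the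
stated formula for `∂_y G`. Its three terms are `−U_P' g' < 0`, `c U_P'' g'² ≤ 0` and
`−c U_P' g'' ≤ 0`: the last because the inverse of the increasing concave `U_A` is convex,
`g'' = −U_A''(g) / U_A'(g)³ ≥ 0`.
-/

/-- The terminal value `G(x,y) = L(x,y,T)` of `L = w + c ∂_y w` in the principal–agent
problem: `G(x,y) = U_P(x − U_A⁻¹(y)) − c·U_P'(x − U_A⁻¹(y)) / U_A'(U_A⁻¹(y))`. -/
noncomputable def G (UA UP : ℝ → ℝ) (c : ℝ) (x y : ℝ) : ℝ :=
  UP (x - Function.invFun UA y)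
    - c * deriv UP (x - Function.invFun UA y) / deriv UA (Function.invFun UA y)

open Function

section InverseFunction

variable {f : ℝ → ℝ}

theorem StrictMono.continuous_invFun (hf : StrictMono f) (hsurj : Surjective f) :
    Continuous (invFun f) := by
  have hright : RightInverse (invFun f) f := rightInverse_invFun hsurj
  refine Monotone.continuous_of_surjective (fun a b hab => ?_)
    (leftInverse_invFun hf.injective).surjective
  exact hf.le_iff_le.mp (by rwa [hright a, hright b])

theorem hasDerivAt_invFun_of_deriv_pos (hf : Differentiable ℝ f) (hf' : ∀ x, 0 < deriv f x)
    (hsurj : Surjective f) (t : ℝ) :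
    HasDerivAt (invFun f) (deriv f (invFun f t))⁻¹ t :=
  HasDerivAt.of_local_left_inverse
    ((strictMono_of_deriv_pos hf').continuous_invFun hsurj).continuousAt
    (hf _).hasDerivAt (hf' _).ne' (.of_forall (rightInverse_invFun hsurj))

theorem deriv_invFun_of_deriv_pos (hf : Differentiable ℝ f) (hf' : ∀ x, 0 < deriv f x)
    (hsurj : Surjective f) :
    deriv (invFun f) = fun t => (deriv f (invFun f t))⁻¹ :=
  funext fun t => (hasDerivAt_invFun_of_deriv_pos hf hf' hsurj t).deriv

theorem hasDerivAt_deriv_invFun_of_deriv_pos (hf : Differentiable ℝ f)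
    (hdf : Differentiable ℝ (deriv f)) (hf' : ∀ x, 0 < deriv f x) (hsurj : Surjective f) (t : ℝ) :
    HasDerivAt (deriv (invFun f))
      (-deriv (deriv f) (invFun f t) / deriv f (invFun f t) ^ 3) t := by
  have hinv := hasDerivAt_invFun_of_deriv_pos hf hf' hsurj t
  rw [deriv_invFun_of_deriv_pos hf hf' hsurj]
  have hcomp : HasDerivAt (fun s => deriv f (invFun f s))
      (deriv (deriv f) (invFun f t) * (deriv f (invFun f t))⁻¹) t :=
    (hdf _).hasDerivAt.comp t hinv
  refine (hcomp.inv (hf' _).ne').congr_deriv ?_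
  have := (hf' (invFun f t)).ne'
  field_simp

theorem deriv_deriv_invFun_nonneg (hf : Differentiable ℝ f) (hdf : Differentiable ℝ (deriv f))
    (hf' : ∀ x, 0 < deriv f x) (hf'' : ∀ x, deriv (deriv f) x ≤ 0) (hsurj : Surjective f)
    (t : ℝ) : 0 ≤ deriv (deriv (invFun f)) t := by
  rw [(hasDerivAt_deriv_invFun_of_deriv_pos hf hdf hf' hsurj t).deriv]
  have := hf' (invFun f t)
  exact div_nonneg (neg_nonneg.mpr (hf'' _)) (by positivity)

end InverseFunction

theorem G_eq_sub_mul_deriv_invFun {UA UP : ℝ → ℝ} (c x : ℝ) (hUA : Differentiable ℝ UA)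
    (hUA' : ∀ z, 0 < deriv UA z) (hsurj : Surjective UA) :
    (fun y => G UA UP c x y) = fun y =>
      UP (x - invFun UA y) - c * deriv UP (x - invFun UA y) * deriv (invFun UA) y := by
  funext y
  rw [G, deriv_invFun_of_deriv_pos hUA hUA' hsurj]
  ring

theorem hasDerivAt_sub_mul_deriv {u g : ℝ → ℝ} (c x y : ℝ)
    (hu : DifferentiableAt ℝ u (x - g y)) (hu' : DifferentiableAt ℝ (deriv u) (x - g y))
    (hg : DifferentiableAt ℝ g y) (hg' : DifferentiableAt ℝ (deriv g) y) :
    HasDerivAt (fun y' => u (x - g y') - c * deriv u (x - g y') * deriv g y')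
      (-deriv u (x - g y) * deriv g y + c * deriv (deriv u) (x - g y) * deriv g y ^ 2
        - c * deriv u (x - g y) * deriv (deriv g) y) y := by
  have hz : HasDerivAt (fun y' => x - g y') (-deriv g y) y := hg.hasDerivAt.const_sub x
  have h₁ := hu.hasDerivAt.comp y hz
  have h₂ := ((hu'.hasDerivAt.comp y hz).const_mul c).mul hg'.hasDerivAt
  exact (h₁.sub h₂).congr_deriv (by simp only [comp_apply]; ring)

/-- For every `(x,y) ∈ ℝ²`, the partial derivative of `G` with respect to `y` exists and
equals `−U_P'(z)·g'(y) + c·U_P''(z)·g'(y)² − c·U_P'(z)·g''(y)` where `z = x − U_A⁻¹(y)`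
and `g = U_A⁻¹`, and it is strictly negative (the claim `L_y(x,y,T) < 0`). -/
theorem stmt_1
    (UA UP : ℝ → ℝ) (c : ℝ) (hc : 0 < c)
    (hUA : ContDiff ℝ 2 UA) (hUP : ContDiff ℝ 2 UP)
    (hUA' : ∀ z, 0 < deriv UA z) (hUA'' : ∀ z, deriv (deriv UA) z ≤ 0)
    (hUP' : ∀ z, 0 < deriv UP z) (hUP'' : ∀ z, deriv (deriv UP) z ≤ 0)
    (hbij : Function.Bijective UA) :
    ∀ x y : ℝ,
      HasDerivAt (fun y' => G UA UP c x y')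
        (-(deriv UP (x - Function.invFun UA y)) * deriv (Function.invFun UA) y
          + c * deriv (deriv UP) (x - Function.invFun UA y)
              * (deriv (Function.invFun UA) y) ^ 2
          - c * deriv UP (x - Function.invFun UA y)
              * deriv (deriv (Function.invFun UA)) y) y
      ∧ (-(deriv UP (x - Function.invFun UA y)) * deriv (Function.invFun UA) y
          + c * deriv (deriv UP) (x - Function.invFun UA y)
              * (deriv (Function.invFun UA) y) ^ 2
          - c * deriv UP (x - Function.invFun UA y)
              * deriv (deriv (Function.invFun UA)) y) < 0 := by
  intro x y
  set g := invFun UA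
  set z := x - g y
  have hUA1 : Differentiable ℝ UA := hUA.differentiable (by norm_num)
  have hUA2 : Differentiable ℝ (deriv UA) := hUA.differentiable_deriv_two
  have hUP1 : Differentiable ℝ UP := hUP.differentiable (by norm_num)
  have hg' := hasDerivAt_invFun_of_deriv_pos hUA1 hUA' hbij.2
  have hg'' := hasDerivAt_deriv_invFun_of_deriv_pos hUA1 hUA2 hUA' hbij.2
  refine ⟨?_, ?_⟩
  · rw [G_eq_sub_mul_deriv_invFun c x hUA1 hUA' hbij.2]
    exact hasDerivAt_sub_mul_deriv c x y (hUP1 _) (hUP.differentiable_deriv_two _)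
      (hg' y).differentiableAt (hg'' y).differentiableAt
  · have hg'_pos : 0 < deriv g y := (hg' y).deriv ▸ inv_pos.mpr (hUA' _)
    have hg''_nonneg := deriv_deriv_invFun_nonneg hUA1 hUA2 hUA' hUA'' hbij.2 y
    have h₁ : 0 < deriv UP z * deriv g y := mul_pos (hUP' z) hg'_pos
    have h₂ : c * deriv (deriv UP) z * deriv g y ^ 2 ≤ 0 :=
      mul_nonpos_of_nonpos_of_nonneg (mul_nonpos_of_nonneg_of_nonpos hc.le (hUP'' z))
        (sq_nonneg _)
    have h₃ : 0 ≤ c * deriv UP z * deriv (deriv g) y :=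
      mul_nonneg (mul_pos hc (hUP' z)).le hg''_nonneg
    linarith
end

section
/- Fix l ∈ ℝ and suppose there exist x₀, y₀ ∈ ℝ with G(x₀, y₀) = l. Then for every x ∈ ℝ there exists a unique y ∈ ℝ with G(x, y) = l. (Existence and uniqueness of the terminal value v*(x,T) of the optimal contract in the paper's Proposition on the well-definedness of v*.) -/
/-- `G` in terms of the certainty equivalent `a = U_A⁻¹(y)` instead of `y`. -/
noncomputable def Gce (UA UP : ℝ → ℝ) (c : ℝ) (x a : ℝ) : ℝ :=
  UP (x - a) - c * deriv UP (x - a) / deriv UA a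

theorem G_apply_eq_Gce {UA : ℝ → ℝ} (hUA : Function.Injective UA) (UP : ℝ → ℝ) (c x a : ℝ) :
    G UA UP c x (UA a) = Gce UA UP c x a := by
  simp only [G, Gce, Function.leftInverse_invFun hUA a]

theorem Gce_add_sub_add (UA UP : ℝ → ℝ) (c x a t : ℝ) :
    Gce UA UP c (x + t) (a + t) = UP (x - a) - c * deriv UP (x - a) / deriv UA (a + t) := by
  simp only [Gce, add_sub_add_right_eq_sub]

theorem antitone_deriv_of_deriv_deriv_nonpos {f : ℝ → ℝ} (hf : ContDiff ℝ 2 f)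
    (hf'' : ∀ z, deriv (deriv f) z ≤ 0) : Antitone (deriv f) :=
  antitone_of_deriv_nonpos hf.differentiable_deriv_two hf''

theorem exists_eq_of_monotone_of_antitone_diag {f : ℝ → ℝ → ℝ} (hcont : ∀ x, Continuous (f x))
    (hmono : ∀ a, Monotone fun x => f x a) (hdiag : ∀ x a, Antitone fun t => f (x + t) (a + t))
    (x₀ a₀ x : ℝ) : ∃ a, f x a = f x₀ a₀ := by
  have hdiag_at : f x (a₀ + (x - x₀)) = f (x₀ + (x - x₀)) (a₀ + (x - x₀)) := by
    rw [add_sub_cancel]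
  have hbetween : f x₀ a₀ ∈ Set.uIcc (f x a₀) (f x (a₀ + (x - x₀))) := by
    rw [Set.mem_uIcc, hdiag_at]
    rcases le_total x₀ x with hx | hx
    · exact Or.inr ⟨hdiag x₀ a₀ (sub_nonneg.2 hx) |>.trans_eq (by simp), hmono a₀ hx⟩
    · exact Or.inl ⟨hmono a₀ hx, (by simp : f x₀ a₀ = f (x₀ + 0) (a₀ + 0)).trans_le
        (hdiag x₀ a₀ (sub_nonpos.2 hx))⟩
  obtain ⟨a, -, ha⟩ := intermediate_value_uIcc (hcont x).continuousOn hbetween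
  exact ⟨a, ha⟩

section Monotonicity

variable {UA UP : ℝ → ℝ} {c : ℝ}

theorem Gce_strictAnti (hc : 0 ≤ c) (hUP : StrictMono UP) (hUP'pos : ∀ z, 0 < deriv UP z)
    (hUP'anti : Antitone (deriv UP)) (hUA'pos : ∀ z, 0 < deriv UA z)
    (hUA'anti : Antitone (deriv UA)) (x : ℝ) : StrictAnti (Gce UA UP c x) := by
  intro a b hab
  have hUP_lt : UP (x - b) < UP (x - a) := hUP (by linarith)
  have hratio : c * deriv UP (x - a) / deriv UA a ≤ c * deriv UP (x - b) / deriv UA b :=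
    div_le_div₀ (mul_nonneg hc (hUP'pos _).le)
      (mul_le_mul_of_nonneg_left (hUP'anti (by linarith)) hc) (hUA'pos b) (hUA'anti hab.le)
  simp only [Gce]
  linarith

theorem Gce_monotone_left {a : ℝ} (hc : 0 ≤ c) (hUP : Monotone UP) (hUP'anti : Antitone (deriv UP))
    (hUA'a : 0 ≤ deriv UA a) : Monotone fun x => Gce UA UP c x a := by
  intro x x' hx
  have hratio : c * deriv UP (x' - a) / deriv UA a ≤ c * deriv UP (x - a) / deriv UA a :=
    div_le_div_of_nonneg_right
      (mul_le_mul_of_nonneg_left (hUP'anti (sub_le_sub_right hx a)) hc) hUA'a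
  simp only [Gce]
  linarith [hUP (sub_le_sub_right hx a)]

theorem Gce_antitone_diag (hc : 0 ≤ c) (hUP'nonneg : ∀ z, 0 ≤ deriv UP z)
    (hUA'pos : ∀ z, 0 < deriv UA z) (hUA'anti : Antitone (deriv UA)) (x a : ℝ) :
    Antitone fun t => Gce UA UP c (x + t) (a + t) := by
  intro t t' ht
  have hratio : c * deriv UP (x - a) / deriv UA (a + t) ≤ c * deriv UP (x - a) / deriv UA (a + t') :=
    div_le_div_of_nonneg_left (mul_nonneg hc (hUP'nonneg _)) (hUA'pos _)
      (hUA'anti (add_le_add_right ht a))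
  simp only [Gce_add_sub_add]
  linarith

theorem Gce_continuous (hUP : Continuous UP) (hUP' : Continuous (deriv UP))
    (hUA' : Continuous (deriv UA)) (hUA'ne : ∀ z, deriv UA z ≠ 0) (x : ℝ) :
    Continuous (Gce UA UP c x) := by
  unfold Gce
  fun_prop (disch := exact hUA'ne _)

end Monotonicity

/-- Fix `l ∈ ℝ` and suppose there exist `x₀, y₀` with `G(x₀,y₀) = l`. Then for every `x`
there exists a unique `y` with `G(x,y) = l` (well-definedness of `v*(x,T)`). -/
theorem stmt_3
    (UA UP : ℝ → ℝ) (c : ℝ) (hc : 0 < c)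
    (hUA : ContDiff ℝ 2 UA) (hUP : ContDiff ℝ 2 UP)
    (hUA' : ∀ z, 0 < deriv UA z) (hUA'' : ∀ z, deriv (deriv UA) z ≤ 0)
    (hUP' : ∀ z, 0 < deriv UP z) (hUP'' : ∀ z, deriv (deriv UP) z ≤ 0)
    (hbij : Function.Bijective UA)
    (l x₀ y₀ : ℝ) (h₀ : G UA UP c x₀ y₀ = l) :
    ∀ x : ℝ, ∃! y : ℝ, G UA UP c x y = l := by
  intro x
  have hUPmono : StrictMono UP := strictMono_of_deriv_pos hUP'
  have hUP'anti := antitone_deriv_of_deriv_deriv_nonpos hUP hUP''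
  have hUA'anti := antitone_deriv_of_deriv_deriv_nonpos hUA hUA''
  obtain ⟨a₀, rfl⟩ := hbij.surjective y₀
  rw [G_apply_eq_Gce hbij.injective] at h₀
  rw [hbij.existsUnique_iff]
  simp only [G_apply_eq_Gce hbij.injective]
  obtain ⟨a, ha⟩ := exists_eq_of_monotone_of_antitone_diag
    (Gce_continuous hUP.continuous (hUP.continuous_deriv (by norm_num))
      (hUA.continuous_deriv (by norm_num)) (fun z => (hUA' z).ne'))
    (fun _ => Gce_monotone_left hc.le hUPmono.monotone hUP'anti (hUA' _).le)
    (Gce_antitone_diag hc.le (fun z => (hUP' z).le) hUA' hUA'anti) x₀ a₀ x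
  rw [h₀] at ha
  exact ⟨a, ha, fun b hb =>
    (Gce_strictAnti hc.le hUPmono hUP' hUP'anti hUA' hUA'anti x).injective (hb.trans ha.symm)⟩
end

section
/- Fix l ∈ ℝ and x₀, y₀ ∈ ℝ with G(x₀, y₀) = l. If x > x₀ and y ∈ ℝ satisfies G(x, y) = l, then y₀ < y ≤ U_A(U_A⁻¹(y₀) + (x − x₀)); if x < x₀ and G(x, y) = l, then U_A(U_A⁻¹(y₀) − (x₀ − x)) ≤ y < y₀. (The sandwich bounds on v*(x,T) from the paper's Proposition on the well-definedness of v*.) -/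
open Function

section InvFun

variable {α β : Type*} [LinearOrder α] [LinearOrder β] [Nonempty α] {f : α → β}

theorem StrictMono.strictMono_invFun (hf : StrictMono f) (hs : Surjective f) :
    StrictMono (invFun f) := by
  intro y y' h
  rwa [← hf.lt_iff_lt, rightInverse_invFun hs y, rightInverse_invFun hs y']

theorem StrictMono.le_apply_iff_invFun_le (hf : StrictMono f) (hs : Surjective f)
    {y : β} {b : α} :
    y ≤ f b ↔ invFun f y ≤ b := by
  rw [← (hf.strictMono_invFun hs).le_iff_le, leftInverse_invFun hf.injective b]

theorem StrictMono.apply_le_iff_le_invFun (hf : StrictMono f) (hs : Surjective f)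
    {y : β} {b : α} :
    f b ≤ y ↔ b ≤ invFun f y := by
  rw [← (hf.strictMono_invFun hs).le_iff_le, leftInverse_invFun hf.injective b]

end InvFun

theorem sub_mul_div_lt_sub_mul_div {f p q : ℝ → ℝ} {c s s' a a' : ℝ} (hc : 0 ≤ c)
    (hf : StrictMono f) (hp : Antitone p) (hp0 : 0 ≤ p s) (hq : Antitone q) (hq0 : 0 < q a)
    (hs : s < s') (ha : a' ≤ a) :
    f s - c * p s / q a < f s' - c * p s' / q a' := by
  have hdiv : c * p s' / q a' ≤ c * p s / q a :=
    div_le_div₀ (mul_nonneg hc hp0) (mul_le_mul_of_nonneg_left (hp hs.le) hc) hq0 (hq ha)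
  linarith [hf hs]

section LevelSet

variable {UA UP : ℝ → ℝ} {c : ℝ} (hc : 0 ≤ c) (hUP : StrictMono UP)
  (hUP'anti : Antitone (deriv UP)) (hUP'pos : ∀ z, 0 < deriv UP z)
  (hUA'anti : Antitone (deriv UA)) (hUA'pos : ∀ z, 0 < deriv UA z)
include hc hUP hUP'anti hUP'pos hUA'anti hUA'pos

theorem G_lt_G {x y x' y' : ℝ} (hs : x - invFun UA y < x' - invFun UA y')
    (ha : invFun UA y' ≤ invFun UA y) : G UA UP c x y < G UA UP c x' y' :=
  sub_mul_div_lt_sub_mul_div hc hUP hUP'anti (hUP'pos _).le hUA'anti (hUA'pos _) hs ha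

theorem invFun_bounds_of_G_eq {x₀ y₀ x y : ℝ} (hx : x₀ < x)
    (hG : G UA UP c x y = G UA UP c x₀ y₀) :
    invFun UA y₀ < invFun UA y ∧ invFun UA y ≤ invFun UA y₀ + (x - x₀) := by
  constructor
  · by_contra! h
    exact (G_lt_G hc hUP hUP'anti hUP'pos hUA'anti hUA'pos (by linarith) h).ne' hG
  · by_contra! h
    exact (G_lt_G hc hUP hUP'anti hUP'pos hUA'anti hUA'pos (by linarith) (by linarith)).ne hG

end LevelSet

/-- Sandwich bounds on `v*(x,T)`: if `G(x₀,y₀) = l`, `x > x₀` and `G(x,y) = l` then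
`y₀ < y ≤ U_A(U_A⁻¹(y₀) + (x − x₀))`; if `x < x₀` and `G(x,y) = l` then
`U_A(U_A⁻¹(y₀) − (x₀ − x)) ≤ y < y₀`. -/
theorem stmt_5
    (UA UP : ℝ → ℝ) (c : ℝ) (hc : 0 < c)
    (hUA : ContDiff ℝ 2 UA) (hUP : ContDiff ℝ 2 UP)
    (hUA' : ∀ z, 0 < deriv UA z) (hUA'' : ∀ z, deriv (deriv UA) z ≤ 0)
    (hUP' : ∀ z, 0 < deriv UP z) (hUP'' : ∀ z, deriv (deriv UP) z ≤ 0)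
    (hbij : Function.Bijective UA)
    (l x₀ y₀ : ℝ) (h₀ : G UA UP c x₀ y₀ = l) :
    (∀ x y : ℝ, x₀ < x → G UA UP c x y = l →
      y₀ < y ∧ y ≤ UA (Function.invFun UA y₀ + (x - x₀)))
    ∧ (∀ x y : ℝ, x < x₀ → G UA UP c x y = l →
      UA (Function.invFun UA y₀ - (x₀ - x)) ≤ y ∧ y < y₀) := by
  have hUAmono : StrictMono UA := strictMono_of_deriv_pos hUA'
  have hinv : StrictMono (invFun UA) := hUAmono.strictMono_invFun hbij.2
  have hUP'anti := antitone_of_deriv_nonpos hUP.differentiable_deriv_two hUP''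
  have hUA'anti := antitone_of_deriv_nonpos hUA.differentiable_deriv_two hUA''
  have bounds {x₁ y₁ x₂ y₂ : ℝ} (hx : x₁ < x₂)
      (hG : G UA UP c x₂ y₂ = G UA UP c x₁ y₁) :=
    invFun_bounds_of_G_eq hc.le (strictMono_of_deriv_pos hUP') hUP'anti hUP' hUA'anti hUA' hx hG
  refine ⟨fun x y hx hG => ?_, fun x y hx hG => ?_⟩
  · obtain ⟨hlt, hle⟩ := bounds hx (hG.trans h₀.symm)
    exact ⟨hinv.lt_iff_lt.mp hlt, (hUAmono.le_apply_iff_invFun_le hbij.2).mpr hle⟩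
  · obtain ⟨hlt, hle⟩ := bounds hx (h₀.trans hG.symm)
    exact ⟨(hUAmono.apply_le_iff_le_invFun hbij.2).mpr (by linarith), hinv.lt_iff_lt.mp hlt⟩
end

section
/- Let l ∈ ℝ and suppose C : ℝ → ℝ is differentiable and satisfies U_P(x − C(x)) − c·U_P'(x − C(x))/U_A'(C(x)) = l for all x ∈ ℝ. Then for every x, writing z = x − C(x), A = U_A'(C(x))²·U_P'(z) − c·U_A'(C(x))·U_P''(z) and B = c·U_A''(C(x))·U_P'(z), one has A > 0, A − B > 0, and C'(x) = A/(A − B). (The implicit differentiation formula for C*_x in the paper's growth lemma.) -/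
/-!
Differentiating the identity `UP (x - C x) - c * UP' (x - C x) / UA' (C x) = l` in `x` gives a
relation that is linear in `C'(x)`; solving it yields `C' = A / (A - B)`.  Concavity and
monotonicity of the utilities make `A > 0` and `B ≤ 0`, so the denominator does not vanish.
-/

noncomputable def firstOrderResidual (UA UP : ℝ → ℝ) (c : ℝ) (C : ℝ → ℝ) (x : ℝ) : ℝ :=
  UP (x - C x) - c * deriv UP (x - C x) / deriv UA (C x)

theorem hasDerivAt_firstOrderResidual {UA UP C : ℝ → ℝ} {c C' x : ℝ}
    (hUA : ContDiff ℝ 2 UA) (hUP : ContDiff ℝ 2 UP) (hC : HasDerivAt C C' x)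
    (ha : deriv UA (C x) ≠ 0) :
    HasDerivAt (firstOrderResidual UA UP c C)
      (deriv UP (x - C x) * (1 - C')
        - (c * (deriv (deriv UP) (x - C x) * (1 - C')) * deriv UA (C x)
            - c * deriv UP (x - C x) * (deriv (deriv UA) (C x) * C')) / deriv UA (C x) ^ 2) x := by
  have hz : HasDerivAt (fun x => x - C x) (1 - C') x := (hasDerivAt_id x).sub hC
  have hUPz := ((hUP.differentiable two_ne_zero) (x - C x)).hasDerivAt.comp x hz
  have hUP'z := (hUP.differentiable_deriv_two (x - C x)).hasDerivAt.comp x hz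
  have hUA'C := (hUA.differentiable_deriv_two (C x)).hasDerivAt.comp x hC
  exact hUPz.sub ((hUP'z.const_mul c).div hUA'C ha)

theorem eq_div_of_implicit_deriv_eq_zero {K : Type*} [Field K] {a a' p p'' c C' : K}
    (ha : a ≠ 0) (hAB : (a ^ 2 * p - c * a * p'') - c * a' * p ≠ 0)
    (h : p * (1 - C') - (c * (p'' * (1 - C')) * a - c * p * (a' * C')) / a ^ 2 = 0) :
    C' = (a ^ 2 * p - c * a * p'') / ((a ^ 2 * p - c * a * p'') - c * a' * p) := by
  rw [eq_div_iff hAB]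
  field_simp at h
  linear_combination -h

theorem stmt_7_general
    (UA UP : ℝ → ℝ) (c : ℝ) (hc : 0 < c)
    (hUA : ContDiff ℝ 2 UA) (hUP : ContDiff ℝ 2 UP)
    (hUA' : ∀ z, 0 < deriv UA z) (hUA'' : ∀ z, deriv (deriv UA) z ≤ 0)
    (hUP' : ∀ z, 0 < deriv UP z) (hUP'' : ∀ z, deriv (deriv UP) z ≤ 0)
    (l : ℝ) (C : ℝ → ℝ) (hCdiff : Differentiable ℝ C)
    (heq : ∀ x : ℝ,
      UP (x - C x) - c * deriv UP (x - C x) / deriv UA (C x) = l) :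
    ∀ x : ℝ,
      0 < (deriv UA (C x)) ^ 2 * deriv UP (x - C x)
            - c * deriv UA (C x) * deriv (deriv UP) (x - C x)
      ∧ 0 < ((deriv UA (C x)) ^ 2 * deriv UP (x - C x)
            - c * deriv UA (C x) * deriv (deriv UP) (x - C x))
            - c * deriv (deriv UA) (C x) * deriv UP (x - C x)
      ∧ deriv C x =
          ((deriv UA (C x)) ^ 2 * deriv UP (x - C x)
            - c * deriv UA (C x) * deriv (deriv UP) (x - C x))
          / (((deriv UA (C x)) ^ 2 * deriv UP (x - C x)
            - c * deriv UA (C x) * deriv (deriv UP) (x - C x))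
            - c * deriv (deriv UA) (C x) * deriv UP (x - C x)) := by
  intro x
  have ha := hUA' (C x)
  have hp := hUP' (x - C x)
  have hA : 0 < deriv UA (C x) ^ 2 * deriv UP (x - C x)
      - c * deriv UA (C x) * deriv (deriv UP) (x - C x) := by
    linarith [mul_pos (pow_pos ha 2) hp,
      mul_nonpos_of_nonneg_of_nonpos (mul_pos hc ha).le (hUP'' (x - C x))]
  have hB : c * deriv (deriv UA) (C x) * deriv UP (x - C x) ≤ 0 :=
    mul_nonpos_of_nonpos_of_nonneg (mul_nonpos_of_nonneg_of_nonpos hc.le (hUA'' _)) hp.le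
  have hAB := sub_pos.mpr (hB.trans_lt hA)
  refine ⟨hA, hAB, ?_⟩
  have hderiv := hasDerivAt_firstOrderResidual (c := c) hUA hUP (hCdiff x).hasDerivAt ha.ne'
  rw [show firstOrderResidual UA UP c C = fun _ => l from funext heq] at hderiv
  exact eq_div_of_implicit_deriv_eq_zero ha.ne' hAB.ne' (hderiv.unique (hasDerivAt_const x l))

/-- Implicit differentiation of the optimal contract: if `C` is differentiable and
`U_P(x − C(x)) − c·U_P'(x − C(x))/U_A'(C(x)) = l` for all `x`, then with
`z = x − C(x)`, `A = U_A'(C(x))²·U_P'(z) − c·U_A'(C(x))·U_P''(z)` and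
`B = c·U_A''(C(x))·U_P'(z)`, one has `A > 0`, `A − B > 0` and `C'(x) = A/(A − B)`. -/
theorem stmt_7
    (UA UP : ℝ → ℝ) (c : ℝ) (hc : 0 < c)
    (hUA : ContDiff ℝ 2 UA) (hUP : ContDiff ℝ 2 UP)
    (hUA' : ∀ z, 0 < deriv UA z) (hUA'' : ∀ z, deriv (deriv UA) z ≤ 0)
    (hUP' : ∀ z, 0 < deriv UP z) (hUP'' : ∀ z, deriv (deriv UP) z ≤ 0)
    (hbij : Function.Bijective UA)
    (l : ℝ) (C : ℝ → ℝ) (hCdiff : Differentiable ℝ C)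
    (heq : ∀ x : ℝ,
      UP (x - C x) - c * deriv UP (x - C x) / deriv UA (C x) = l) :
    ∀ x : ℝ,
      0 < (deriv UA (C x)) ^ 2 * deriv UP (x - C x)
            - c * deriv UA (C x) * deriv (deriv UP) (x - C x)
      ∧ 0 < ((deriv UA (C x)) ^ 2 * deriv UP (x - C x)
            - c * deriv UA (C x) * deriv (deriv UP) (x - C x))
            - c * deriv (deriv UA) (C x) * deriv UP (x - C x)
      ∧ deriv C x =
          ((deriv UA (C x)) ^ 2 * deriv UP (x - C x)
            - c * deriv UA (C x) * deriv (deriv UP) (x - C x))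
          / (((deriv UA (C x)) ^ 2 * deriv UP (x - C x)
            - c * deriv UA (C x) * deriv (deriv UP) (x - C x))
            - c * deriv (deriv UA) (C x) * deriv UP (x - C x)) :=
  stmt_7_general UA UP c hc hUA hUP hUA' hUA'' hUP' hUP'' l C hCdiff heq
end

section
/- Let l ∈ ℝ and suppose C : ℝ → ℝ is differentiable and satisfies U_P(x − C(x)) − c·U_P'(x − C(x))/U_A'(C(x)) = l for all x ∈ ℝ. Then 0 < C'(x) ≤ 1 for every x ∈ ℝ. (Consequence of the implicit differentiation formula for C*_x; in particular C*_x satisfies the growth bound required in the paper's growth lemma.) -/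
/-!
Differentiating the identity in `x` gives `(1 - C') (U_P' - c U_P'' / U_A') = -(c U_P' U_A'' / U_A'²) C'`,
where the factor on the left is positive and the one on the right nonnegative by the monotonicity and
concavity assumptions. Hence `C' = K / (K + M)` with `K > 0` and `M ≥ 0`, which lies in `(0, 1]`.
-/

lemma pos_and_le_one_of_one_sub_mul_eq {K M d : ℝ} (hK : 0 < K) (hM : 0 ≤ M)
    (h : (1 - d) * K = M * d) : 0 < d ∧ d ≤ 1 := by
  constructor <;> nlinarith [mul_nonneg hM hK.le]

lemma hasDerivAt_indifference {UA UP C : ℝ → ℝ} {x d : ℝ} (c : ℝ)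
    (hUP : Differentiable ℝ UP) (hdUP : Differentiable ℝ (deriv UP))
    (hdUA : Differentiable ℝ (deriv UA)) (hUA' : deriv UA (C x) ≠ 0) (hC : HasDerivAt C d x) :
    HasDerivAt (fun t => UP (t - C t) - c * deriv UP (t - C t) / deriv UA (C t))
      ((1 - d) * (deriv UP (x - C x) - c * deriv (deriv UP) (x - C x) / deriv UA (C x)) -
        -(c * deriv UP (x - C x) * deriv (deriv UA) (C x) / deriv UA (C x) ^ 2) * d) x := by
  have hy : HasDerivAt (fun t => t - C t) (1 - d) x := (hasDerivAt_id x).sub hC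
  have hP := (hUP _).hasDerivAt.comp x hy
  have hP' := (hdUP _).hasDerivAt.comp x hy
  have hA' := (hdUA _).hasDerivAt.comp x hC
  refine (hP.sub ((hP'.const_mul c).div hA' hUA')).congr_deriv ?_
  simp only [Function.comp_apply]
  field_simp
  ring

theorem stmt_8_general
    (UA UP : ℝ → ℝ) (c : ℝ) (hc : 0 < c)
    (hUA : ContDiff ℝ 2 UA) (hUP : ContDiff ℝ 2 UP)
    (hUA' : ∀ z, 0 < deriv UA z) (hUA'' : ∀ z, deriv (deriv UA) z ≤ 0)
    (hUP' : ∀ z, 0 < deriv UP z) (hUP'' : ∀ z, deriv (deriv UP) z ≤ 0)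
    (l : ℝ) (C : ℝ → ℝ) (hCdiff : Differentiable ℝ C)
    (heq : ∀ x : ℝ,
      UP (x - C x) - c * deriv UP (x - C x) / deriv UA (C x) = l) :
    ∀ x : ℝ, 0 < deriv C x ∧ deriv C x ≤ 1 := by
  intro x
  have hderiv := hasDerivAt_indifference c (hUP.differentiable two_ne_zero)
    hUP.differentiable_deriv_two hUA.differentiable_deriv_two (hUA' (C x)).ne'
    (hCdiff x).hasDerivAt
  rw [show (fun t => UP (t - C t) - c * deriv UP (t - C t) / deriv UA (C t)) = fun _ => l
    from funext heq] at hderiv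
  have hbalance := sub_eq_zero.mp (hderiv.unique (hasDerivAt_const x l))
  have hUP''_term : c * deriv (deriv UP) (x - C x) / deriv UA (C x) ≤ 0 :=
    div_nonpos_of_nonpos_of_nonneg (mul_nonpos_of_nonneg_of_nonpos hc.le (hUP'' _)) (hUA' _).le
  have hUA''_term : c * deriv UP (x - C x) * deriv (deriv UA) (C x) ≤ 0 :=
    mul_nonpos_of_nonneg_of_nonpos (mul_pos hc (hUP' _)).le (hUA'' _)
  exact pos_and_le_one_of_one_sub_mul_eq (by linarith [hUP' (x - C x)])
    (neg_nonneg.mpr (div_nonpos_of_nonpos_of_nonneg hUA''_term (sq_nonneg _))) hbalance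

/-- If `C` is differentiable and `U_P(x − C(x)) − c·U_P'(x − C(x))/U_A'(C(x)) = l`
for all `x`, then `0 < C'(x) ≤ 1` for every `x`. -/
theorem stmt_8
    (UA UP : ℝ → ℝ) (c : ℝ) (hc : 0 < c)
    (hUA : ContDiff ℝ 2 UA) (hUP : ContDiff ℝ 2 UP)
    (hUA' : ∀ z, 0 < deriv UA z) (hUA'' : ∀ z, deriv (deriv UA) z ≤ 0)
    (hUP' : ∀ z, 0 < deriv UP z) (hUP'' : ∀ z, deriv (deriv UP) z ≤ 0)
    (hbij : Function.Bijective UA)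
    (l : ℝ) (C : ℝ → ℝ) (hCdiff : Differentiable ℝ C)
    (heq : ∀ x : ℝ,
      UP (x - C x) - c * deriv UP (x - C x) / deriv UA (C x) = l) :
    ∀ x : ℝ, 0 < deriv C x ∧ deriv C x ≤ 1 :=
  stmt_8_general UA UP c hc hUA hUP hUA' hUA'' hUP' hUP'' l C hCdiff heq
end

section
/- Let I ⊆ ℝ be an open set and C : ℝ × I → ℝ satisfy U_P(x − C(x,l)) − c·U_P'(x − C(x,l))/U_A'(C(x,l)) = l for all (x,l) ∈ ℝ × I, with C differentiable in l. Fix l₀ ∈ I and suppose there is c₁ > 0 with |C(x,l₀)| ≤ c₁(1 + |x|) for all x ∈ ℝ. Then there exists a constant c₄ > 0, independent of x, such that |∂C/∂l (x, l₀)| ≥ (1/c₄)·e^{−c₄|x|} for all x ∈ ℝ. (The exponential lower bound on C*_l from the paper's growth lemma.) -/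
/-!
Differentiating the defining equation `F_x(C(x,l)) = l` at `l₀` gives
`∂_y F_x(C(x,l₀)) · ∂_l C(x,l₀) = 1`, so it suffices to bound `|∂_y F_x|` at `y = C(x,l₀)` by
`K e^{A(1+|x|)}`. By the linear growth of `C(·,l₀)`, both `y` and `x − y` are `O(1 + |x|)`, and
`∂_y F_x` is a polynomial in `U_P'(x − y)`, `U_P''(x − y)`, `U_A''(y)` and `1/U_A'(y)`, each of
which is at most exponential in `1 + |x|` by the growth assumptions on `U_A` and `U_P`.
-/

open Real Filter Topology

/-- `F_x(y)`, the left-hand side of the first-order condition `F_x(C(x,l)) = l`. -/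
noncomputable def focLhs (UA UP : ℝ → ℝ) (c x y : ℝ) : ℝ :=
  UP (x - y) - c * deriv UP (x - y) / deriv UA y

noncomputable def focLhsDeriv (UA UP : ℝ → ℝ) (c x y : ℝ) : ℝ :=
  -deriv UP (x - y) + c * deriv (deriv UP) (x - y) / deriv UA y
    + c * deriv UP (x - y) * deriv (deriv UA) y / deriv UA y ^ 2

theorem hasDerivAt_focLhs {UA UP : ℝ → ℝ} {c x y : ℝ}
    (hUP : DifferentiableAt ℝ UP (x - y)) (hUP' : DifferentiableAt ℝ (deriv UP) (x - y))
    (hUA' : DifferentiableAt ℝ (deriv UA) y) (hUAy : deriv UA y ≠ 0) :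
    HasDerivAt (focLhs UA UP c x) (focLhsDeriv UA UP c x y) y := by
  have hsub : HasDerivAt (fun y : ℝ => x - y) (-1) y := by
    simpa using (hasDerivAt_id y).const_sub x
  have h : HasDerivAt (fun y => UP (x - y) - c * deriv UP (x - y) / deriv UA y) _ y :=
    (hUP.hasDerivAt.comp y hsub).sub
      (((hUP'.hasDerivAt.comp y hsub).const_mul c).div hUA'.hasDerivAt hUAy)
  refine h.congr_deriv ?_
  rw [focLhsDeriv, Function.comp_apply]
  field_simp
  ring

/-- Unlike `HasDerivAt.of_local_left_inverse`, this does not assume `f' ≠ 0` but proves it. -/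
theorem HasDerivAt.mul_deriv_eq_one {𝕜 : Type*} [NontriviallyNormedField 𝕜] {f g : 𝕜 → 𝕜}
    {f' a : 𝕜} (hf : HasDerivAt f f' (g a)) (hg : DifferentiableAt 𝕜 g a)
    (hfg : ∀ᶠ y in 𝓝 a, f (g y) = y) : f' * _root_.deriv g a = 1 :=
  (((hasDerivAt_id a).congr_of_eventuallyEq hfg).unique (hf.comp a hg.hasDerivAt)).symm

theorem abs_le_two_mul_exp_of_abs_le {t c₀ z M : ℝ} (hc₀ : 0 ≤ c₀)
    (ht : |t| ≤ c₀ * (1 + exp (c₀ * |z|))) (hz : |z| ≤ M) : |t| ≤ 2 * c₀ * exp (c₀ * M) := by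
  have hexp : exp (c₀ * |z|) ≤ exp (c₀ * M) := exp_le_exp.mpr (by gcongr)
  have hone : 1 ≤ exp (c₀ * M) := one_le_exp (mul_nonneg hc₀ ((abs_nonneg z).trans hz))
  nlinarith

theorem inv_le_mul_exp_of_mul_exp_le {t c₀ z M : ℝ} (hc₀ : 0 < c₀)
    (ht : 1 / c₀ * exp (-c₀ * |z|) ≤ t) (hz : |z| ≤ M) : 0 < t ∧ t⁻¹ ≤ c₀ * exp (c₀ * M) := by
  have hlow : 0 < 1 / c₀ * exp (-c₀ * |z|) := by positivity
  refine ⟨hlow.trans_le ht, ?_⟩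
  calc t⁻¹ ≤ (1 / c₀ * exp (-c₀ * |z|))⁻¹ := inv_anti₀ hlow ht
    _ = c₀ * exp (c₀ * |z|) := by rw [one_div, mul_inv, inv_inv, ← exp_neg]; ring_nf
    _ ≤ c₀ * exp (c₀ * M) := by gcongr

theorem abs_neg_add_div_add_div_sq_le {u₁ u₂ a a₁ c B E : ℝ} (hc : 0 ≤ c) (hE : 1 ≤ E)
    (hu₁ : |u₁| ≤ B * E) (hu₂ : |u₂| ≤ B * E) (ha₁ : |a₁| ≤ B * E) (ha : 0 < a)
    (ha' : a⁻¹ ≤ B * E) :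
    |-u₁ + c * u₂ / a + c * u₁ * a₁ / a ^ 2| ≤ (B + c * B ^ 2 + c * B ^ 4) * E ^ 4 := by
  have hBE : 0 ≤ B * E := (abs_nonneg u₁).trans hu₁
  have hB : 0 ≤ B := nonneg_of_mul_nonneg_left hBE (by linarith)
  have hE2 : E ^ 2 ≤ E ^ 4 := pow_le_pow_right₀ hE (by norm_num)
  have hE1 : E ≤ E ^ 4 := le_self_pow₀ hE (by norm_num)
  calc |-u₁ + c * u₂ / a + c * u₁ * a₁ / a ^ 2|
      ≤ |u₁| + c * |u₂| * a⁻¹ + c * (|u₁| * |a₁|) * a⁻¹ ^ 2 := by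
        refine (abs_add_le _ _).trans (add_le_add ((abs_add_le _ _).trans (le_of_eq ?_)) ?_)
        · simp [abs_mul, abs_of_nonneg hc, abs_of_pos ha, div_eq_mul_inv]
        · simp [abs_mul, abs_of_nonneg hc, abs_of_pos ha, div_eq_mul_inv, mul_assoc]
    _ ≤ B * E + c * (B * E) * (B * E) + c * ((B * E) * (B * E)) * (B * E) ^ 2 := by gcongr
    _ = B * E + c * B ^ 2 * E ^ 2 + c * B ^ 4 * E ^ 4 := by ring
    _ ≤ (B + c * B ^ 2 + c * B ^ 4) * E ^ 4 := by
        nlinarith [mul_le_mul_of_nonneg_left hE2 (by positivity : 0 ≤ c * B ^ 2),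
          mul_le_mul_of_nonneg_left hE1 hB]

theorem abs_focLhsDeriv_le {UA UP : ℝ → ℝ} {c c₀ x y M : ℝ} (hc : 0 ≤ c) (hc₀ : 0 < c₀)
    (hUAlow : ∀ z : ℝ, 1 / c₀ * exp (-c₀ * |z|) ≤ deriv UA z)
    (hUPup : ∀ z : ℝ, |deriv UP z| ≤ c₀ * (1 + exp (c₀ * |z|)))
    (hUAup2 : ∀ z : ℝ, |deriv (deriv UA) z| ≤ c₀ * (1 + exp (c₀ * |z|)))
    (hUPup2 : ∀ z : ℝ, |deriv (deriv UP) z| ≤ c₀ * (1 + exp (c₀ * |z|)))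
    (hy : |y| ≤ M) (hxy : |x - y| ≤ M) :
    |focLhsDeriv UA UP c x y| ≤
      (2 * c₀ + c * (2 * c₀) ^ 2 + c * (2 * c₀) ^ 4) * exp (4 * c₀ * M) := by
  obtain ⟨hUApos, hUAinv⟩ := inv_le_mul_exp_of_mul_exp_le hc₀ (hUAlow y) hy
  have hE : 1 ≤ exp (c₀ * M) := one_le_exp (mul_nonneg hc₀.le ((abs_nonneg y).trans hy))
  have hexp : exp (4 * c₀ * M) = exp (c₀ * M) ^ 4 := by rw [← exp_nat_mul]; ring_nf
  rw [hexp]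
  refine abs_neg_add_div_add_div_sq_le hc hE
    (abs_le_two_mul_exp_of_abs_le hc₀.le (hUPup _) hxy)
    (abs_le_two_mul_exp_of_abs_le hc₀.le (hUPup2 _) hxy)
    (abs_le_two_mul_exp_of_abs_le hc₀.le (hUAup2 _) hy) hUApos ?_
  nlinarith [exp_pos (c₀ * M)]

theorem exists_exp_le_abs_of_mul_eq_one {f g : ℝ → ℝ} {K A : ℝ} (hK : 0 < K)
    (hgf : ∀ x, g x * f x = 1) (hg : ∀ x, |g x| ≤ K * exp (A * (1 + |x|))) :
    ∃ c₄ : ℝ, 0 < c₄ ∧ ∀ x : ℝ, 1 / c₄ * exp (-c₄ * |x|) ≤ |f x| := by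
  refine ⟨max (K * exp A) A, by positivity, fun x => ?_⟩
  set c₄ := max (K * exp A) A
  have hgx : 0 < |g x| := abs_pos.mpr (left_ne_zero_of_mul_eq_one (hgf x))
  have hfx : |f x| = 1 / |g x| :=
    eq_one_div_of_mul_eq_one_right (by rw [← abs_mul, hgf, abs_one])
  calc 1 / c₄ * exp (-c₄ * |x|) = 1 / (c₄ * exp (c₄ * |x|)) := by
        rw [neg_mul, exp_neg]; field_simp
    _ ≤ 1 / (K * exp (A * (1 + |x|))) := by
        rw [mul_add, mul_one, exp_add, ← mul_assoc]
        gcongr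
        · exact le_max_left _ _
        · exact le_max_right _ _
    _ ≤ |f x| := by rw [hfx]; gcongr; exact hg x

theorem stmt_10_general
    (UA UP : ℝ → ℝ) (c : ℝ) (hc : 0 < c)
    (hUA : ContDiff ℝ 2 UA) (hUP : ContDiff ℝ 2 UP)
    (c₀ : ℝ) (hc₀ : 0 < c₀)
    (hUAlow : ∀ z : ℝ, (1 / c₀) * Real.exp (-c₀ * |z|) ≤ deriv UA z)
    (hUPup : ∀ z : ℝ, |deriv UP z| ≤ c₀ * (1 + Real.exp (c₀ * |z|)))
    (hUAup2 : ∀ z : ℝ, |deriv (deriv UA) z| ≤ c₀ * (1 + Real.exp (c₀ * |z|)))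
    (hUPup2 : ∀ z : ℝ, |deriv (deriv UP) z| ≤ c₀ * (1 + Real.exp (c₀ * |z|)))
    (I : Set ℝ) (hI : IsOpen I)
    (C : ℝ → ℝ → ℝ)
    (heq : ∀ x : ℝ, ∀ l ∈ I,
      UP (x - C x l) - c * deriv UP (x - C x l) / deriv UA (C x l) = l)
    (hCdiff : ∀ x : ℝ, ∀ l ∈ I, DifferentiableAt ℝ (C x) l)
    (l₀ : ℝ) (hl₀ : l₀ ∈ I)
    (c₁ : ℝ)
    (hgrowth : ∀ x : ℝ, |C x l₀| ≤ c₁ * (1 + |x|)) :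
    ∃ c₄ : ℝ, 0 < c₄ ∧
      ∀ x : ℝ, (1 / c₄) * Real.exp (-c₄ * |x|) ≤ |deriv (C x) l₀| := by
  refine exists_exp_le_abs_of_mul_eq_one (g := fun x => focLhsDeriv UA UP c x (C x l₀))
    (K := 2 * c₀ + c * (2 * c₀) ^ 2 + c * (2 * c₀) ^ 4) (A := 4 * c₀ * (1 + c₁))
    (by positivity) (fun x => ?_) (fun x => ?_)
  · have hUApos : 0 < deriv UA (C x l₀) := lt_of_lt_of_le (by positivity) (hUAlow _)
    have hF := hasDerivAt_focLhs (c := c) (x := x) (hUP.differentiable two_ne_zero _)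
      (hUP.differentiable_deriv_two _) (hUA.differentiable_deriv_two _) hUApos.ne'
    exact hF.mul_deriv_eq_one (hCdiff x l₀ hl₀) (eventually_of_mem (hI.mem_nhds hl₀) (heq x))
  · have hy : |C x l₀| ≤ (1 + c₁) * (1 + |x|) := by linarith [hgrowth x, abs_nonneg x]
    have hxy : |x - C x l₀| ≤ (1 + c₁) * (1 + |x|) := by
      linarith [hgrowth x, abs_sub x (C x l₀)]
    rw [mul_assoc (4 * c₀)]
    exact abs_focLhsDeriv_le hc.le hc₀ hUAlow hUPup hUAup2 hUPup2 hy hxy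

/-- Exponential lower bound on `C*_l`: if `C(x,l)` solves
`U_P(x − C(x,l)) − c·U_P'(x − C(x,l))/U_A'(C(x,l)) = l` on `ℝ × I` (`I` open), is
differentiable in `l`, and `x ↦ C(x,l₀)` has linear growth, then there is `c₄ > 0`,
independent of `x`, with `|∂C/∂l(x,l₀)| ≥ (1/c₄)·e^{−c₄|x|}` for all `x`. -/
theorem stmt_10
    (UA UP : ℝ → ℝ) (c : ℝ) (hc : 0 < c)
    (hUA : ContDiff ℝ 2 UA) (hUP : ContDiff ℝ 2 UP)
    (hUA' : ∀ z, 0 < deriv UA z) (hUA'' : ∀ z, deriv (deriv UA) z ≤ 0)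
    (hUP' : ∀ z, 0 < deriv UP z) (hUP'' : ∀ z, deriv (deriv UP) z ≤ 0)
    (hbij : Function.Bijective UA)
    (c₀ : ℝ) (hc₀ : 0 < c₀)
    (hUAlow : ∀ z : ℝ, (1 / c₀) * Real.exp (-c₀ * |z|) ≤ deriv UA z)
    (hUPlow : ∀ z : ℝ, (1 / c₀) * Real.exp (-c₀ * |z|) ≤ deriv UP z)
    (hUAup : ∀ z : ℝ, |deriv UA z| ≤ c₀ * (1 + Real.exp (c₀ * |z|)))
    (hUPup : ∀ z : ℝ, |deriv UP z| ≤ c₀ * (1 + Real.exp (c₀ * |z|)))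
    (hUAup2 : ∀ z : ℝ, |deriv (deriv UA) z| ≤ c₀ * (1 + Real.exp (c₀ * |z|)))
    (hUPup2 : ∀ z : ℝ, |deriv (deriv UP) z| ≤ c₀ * (1 + Real.exp (c₀ * |z|)))
    (I : Set ℝ) (hI : IsOpen I)
    (C : ℝ → ℝ → ℝ)
    (heq : ∀ x : ℝ, ∀ l ∈ I,
      UP (x - C x l) - c * deriv UP (x - C x l) / deriv UA (C x l) = l)
    (hCdiff : ∀ x : ℝ, ∀ l ∈ I, DifferentiableAt ℝ (C x) l)
    (l₀ : ℝ) (hl₀ : l₀ ∈ I)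
    (c₁ : ℝ) (hc₁ : 0 < c₁)
    (hgrowth : ∀ x : ℝ, |C x l₀| ≤ c₁ * (1 + |x|)) :
    ∃ c₄ : ℝ, 0 < c₄ ∧
      ∀ x : ℝ, (1 / c₄) * Real.exp (-c₄ * |x|) ≤ |deriv (C x) l₀| :=
  stmt_10_general UA UP c hc hUA hUP c₀ hc₀ hUAlow hUPup hUAup2 hUPup2 I hI C heq hCdiff l₀ hl₀ c₁
    hgrowth
end

section
/- Let σ : ℝ → ℝ, c > 0, l ∈ ℝ. Let L : ℝ³ → ℝ (arguments written (x, v, s)) be twice continuously differentiable with L_v(x,v,s) < 0 for all (x,v,s), and suppose L satisfies L_s + (σ(x)²/2)·L_{xx} = (σ(x)²/(2c))·L_x²/L_v + σ(x)²·L_x·L_{xv}/L_v − (σ(x)²/2)·L_x²·L_{vv}/L_v² at every point. Let v : ℝ × ℝ → ℝ (arguments (x,s)) be twice continuously differentiable and satisfy L(x, v(x,s), s) = l for all (x,s). Then v satisfies v_s + (σ(x)²/2)·v_{xx} + (σ(x)²/(2c))·v_x² = 0 at every point (x,s). (The key computation in the proof of the paper's equivalence theorem u = w: the level-set function v* of L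 solves the agent's HJB equation.) -/
/-- First partial derivative in the 1st argument of a function of three real variables. -/
noncomputable def p1 (f : ℝ → ℝ → ℝ → ℝ) (x y t : ℝ) : ℝ := deriv (fun a => f a y t) x
/-- First partial derivative in the 2nd argument. -/
noncomputable def p2 (f : ℝ → ℝ → ℝ → ℝ) (x y t : ℝ) : ℝ := deriv (fun b => f x b t) y
/-- First partial derivative in the 3rd argument. -/
noncomputable def p3 (f : ℝ → ℝ → ℝ → ℝ) (x y t : ℝ) : ℝ := deriv (fun s => f x y s) t
/-- Second partial derivative in the 1st argument. -/
noncomputable def p11 (f : ℝ → ℝ → ℝ → ℝ) : ℝ → ℝ → ℝ → ℝ := p1 (p1 f)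
/-- Mixed second partial derivative (first in the 1st, then in the 2nd argument). -/
noncomputable def p12 (f : ℝ → ℝ → ℝ → ℝ) : ℝ → ℝ → ℝ → ℝ := p2 (p1 f)
/-- Second partial derivative in the 2nd argument. -/
noncomputable def p22 (f : ℝ → ℝ → ℝ → ℝ) : ℝ → ℝ → ℝ → ℝ := p2 (p2 f)

/-- Partial derivative in the first variable of a function of `(x,s)`. -/
noncomputable def qX (f : ℝ → ℝ → ℝ) (x s : ℝ) : ℝ := deriv (fun a => f a s) x
/-- Partial derivative in the second variable of a function of `(x,s)`. -/
noncomputable def qS (f : ℝ → ℝ → ℝ) (x s : ℝ) : ℝ := deriv (fun b => f x b) s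
/-- Second partial derivative in the first variable of a function of `(x,s)`. -/
noncomputable def qXX (f : ℝ → ℝ → ℝ) (x s : ℝ) : ℝ := deriv (fun a => qX f a s) x

/-! Differentiating the level-set identity `L(x, v(x,s), s) = l` once in `s`, and once and twice
in `x`, expresses `v_s`, `v_x` and `v_xx` through the partial derivatives of `L` (implicit
differentiation, possible since `L_v ≠ 0`). Substituting `L_x = -v_x L_v` into the PDE for `L` and
dividing by `L_v` turns it into the HJB equation for `v`. -/

section ChainRule

variable {𝕜 : Type*} [NontriviallyNormedField 𝕜]
  {E : Type*} [NormedAddCommGroup E] [NormedSpace 𝕜 E]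
  {G : Type*} [NormedAddCommGroup G] [NormedSpace 𝕜 G]
  {F : E → G} {γ : 𝕜 → E} {t : 𝕜} {l : G}

theorem fderiv_apply_eq_zero_of_comp_eq_const {γ' : E} (hF : DifferentiableAt 𝕜 F (γ t))
    (hγ : HasDerivAt γ γ' t) (hconst : ∀ u, F (γ u) = l) : fderiv 𝕜 F (γ t) γ' = 0 := by
  have hderiv := (hF.hasFDerivAt.comp_hasDerivAt t hγ).deriv
  rwa [Function.comp_def, funext hconst, deriv_const, eq_comm] at hderiv

theorem hasDerivAt_fderiv_apply_comp {γ' : E} {w : 𝕜 → E} {w' : E}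
    (hF : DifferentiableAt 𝕜 (fderiv 𝕜 F) (γ t)) (hγ : HasDerivAt γ γ' t)
    (hw : HasDerivAt w w' t) :
    HasDerivAt (fun u => fderiv 𝕜 F (γ u) (w u))
      (fderiv 𝕜 (fderiv 𝕜 F) (γ t) γ' (w t) + fderiv 𝕜 F (γ t) w') t :=
  (hF.hasFDerivAt.comp_hasDerivAt t hγ).clm_apply hw

theorem fderiv_fderiv_add_fderiv_eq_zero_of_comp_eq_const {γ' : 𝕜 → E} {γ'' : E}
    (hF : Differentiable 𝕜 F) (hF' : DifferentiableAt 𝕜 (fderiv 𝕜 F) (γ t))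
    (hγ : ∀ u, HasDerivAt γ (γ' u) u) (hγ' : HasDerivAt γ' γ'' t) (hconst : ∀ u, F (γ u) = l) :
    fderiv 𝕜 (fderiv 𝕜 F) (γ t) (γ' t) (γ' t) + fderiv 𝕜 F (γ t) γ'' = 0 := by
  have hderiv := (hasDerivAt_fderiv_apply_comp hF' (hγ t) hγ').deriv
  have hzero : (fun u => fderiv 𝕜 F (γ u) (γ' u)) = fun _ => 0 :=
    funext fun u => fderiv_apply_eq_zero_of_comp_eq_const (hF _) (hγ u) hconst
  rwa [hzero, deriv_const, eq_comm] at hderiv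

theorem fderiv_fderiv_apply_const {p : E} (hF : DifferentiableAt 𝕜 (fderiv 𝕜 F) p) (e w : E) :
    fderiv 𝕜 (fun q => fderiv 𝕜 F q e) p w = fderiv 𝕜 (fderiv 𝕜 F) p w e := by
  simp [(hF.hasFDerivAt.clm_apply (hasFDerivAt_const e p)).fderiv]

end ChainRule

theorem ContinuousLinearMap.apply_triple {M : Type*} [AddCommMonoid M] [Module ℝ M]
    [TopologicalSpace M] (f : ℝ × ℝ × ℝ →L[ℝ] M) (a b c : ℝ) :
    f (a, b, c) = a • f (1, 0, 0) + b • f (0, 1, 0) + c • f (0, 0, 1) := by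
  rw [← map_smul, ← map_smul, ← map_smul, ← map_add, ← map_add]
  simp

def uncurry3 (L : ℝ → ℝ → ℝ → ℝ) (p : ℝ × ℝ × ℝ) : ℝ := L p.1 p.2.1 p.2.2

section Partials

variable {L : ℝ → ℝ → ℝ → ℝ} {x y t : ℝ}

theorem p1_eq_fderiv (hL : DifferentiableAt ℝ (uncurry3 L) (x, y, t)) :
    p1 L x y t = fderiv ℝ (uncurry3 L) (x, y, t) (1, 0, 0) :=
  (hL.hasFDerivAt.comp_hasDerivAt (l := uncurry3 L) x
    ((hasDerivAt_id x).prodMk ((hasDerivAt_const x y).prodMk (hasDerivAt_const x t)))).deriv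

theorem p2_eq_fderiv (hL : DifferentiableAt ℝ (uncurry3 L) (x, y, t)) :
    p2 L x y t = fderiv ℝ (uncurry3 L) (x, y, t) (0, 1, 0) :=
  (hL.hasFDerivAt.comp_hasDerivAt (l := uncurry3 L) y
    ((hasDerivAt_const y x).prodMk ((hasDerivAt_id y).prodMk (hasDerivAt_const y t)))).deriv

theorem p3_eq_fderiv (hL : DifferentiableAt ℝ (uncurry3 L) (x, y, t)) :
    p3 L x y t = fderiv ℝ (uncurry3 L) (x, y, t) (0, 0, 1) :=
  (hL.hasFDerivAt.comp_hasDerivAt (l := uncurry3 L) t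
    ((hasDerivAt_const t x).prodMk ((hasDerivAt_const t y).prodMk (hasDerivAt_id t)))).deriv

theorem uncurry3_p1 (hL : Differentiable ℝ (uncurry3 L)) :
    uncurry3 (p1 L) = fun p => fderiv ℝ (uncurry3 L) p (1, 0, 0) :=
  funext fun _ => p1_eq_fderiv (hL _)

theorem uncurry3_p2 (hL : Differentiable ℝ (uncurry3 L)) :
    uncurry3 (p2 L) = fun p => fderiv ℝ (uncurry3 L) p (0, 1, 0) :=
  funext fun _ => p2_eq_fderiv (hL _)

theorem p11_eq_fderiv_fderiv (hL : Differentiable ℝ (uncurry3 L))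
    (hL' : DifferentiableAt ℝ (fderiv ℝ (uncurry3 L)) (x, y, t)) :
    p11 L x y t = fderiv ℝ (fderiv ℝ (uncurry3 L)) (x, y, t) (1, 0, 0) (1, 0, 0) := by
  rw [p11, p1_eq_fderiv, uncurry3_p1 hL, fderiv_fderiv_apply_const hL']
  rw [uncurry3_p1 hL]
  exact hL'.clm_apply (differentiableAt_const _)

theorem p12_eq_fderiv_fderiv (hL : Differentiable ℝ (uncurry3 L))
    (hL' : DifferentiableAt ℝ (fderiv ℝ (uncurry3 L)) (x, y, t)) :
    p12 L x y t = fderiv ℝ (fderiv ℝ (uncurry3 L)) (x, y, t) (0, 1, 0) (1, 0, 0) := by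
  rw [p12, p2_eq_fderiv, uncurry3_p1 hL, fderiv_fderiv_apply_const hL']
  rw [uncurry3_p1 hL]
  exact hL'.clm_apply (differentiableAt_const _)

theorem p22_eq_fderiv_fderiv (hL : Differentiable ℝ (uncurry3 L))
    (hL' : DifferentiableAt ℝ (fderiv ℝ (uncurry3 L)) (x, y, t)) :
    p22 L x y t = fderiv ℝ (fderiv ℝ (uncurry3 L)) (x, y, t) (0, 1, 0) (0, 1, 0) := by
  rw [p22, p2_eq_fderiv, uncurry3_p2 hL, fderiv_fderiv_apply_const hL']
  rw [uncurry3_p2 hL]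
  exact hL'.clm_apply (differentiableAt_const _)

end Partials

section ImplicitDifferentiation

variable {L : ℝ → ℝ → ℝ → ℝ} {x t l : ℝ}

theorem implicit_deriv_p1 {g : ℝ → ℝ} (hL : DifferentiableAt ℝ (uncurry3 L) (x, g x, t))
    (hg : DifferentiableAt ℝ g x) (hlev : ∀ a, L a (g a) t = l) :
    p1 L x (g x) t + deriv g x * p2 L x (g x) t = 0 := by
  have h := fderiv_apply_eq_zero_of_comp_eq_const (γ := fun a => (a, g a, t)) hL
    ((hasDerivAt_id x).prodMk (hg.hasDerivAt.prodMk (hasDerivAt_const x t))) hlev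
  rw [ContinuousLinearMap.apply_triple] at h
  rw [p1_eq_fderiv hL, p2_eq_fderiv hL]
  simpa using h

theorem implicit_deriv_p3 {g : ℝ → ℝ} (hL : DifferentiableAt ℝ (uncurry3 L) (x, g t, t))
    (hg : DifferentiableAt ℝ g t) (hlev : ∀ b, L x (g b) b = l) :
    p3 L x (g t) t + deriv g t * p2 L x (g t) t = 0 := by
  have h := fderiv_apply_eq_zero_of_comp_eq_const (γ := fun b => (x, g b, b)) hL
    ((hasDerivAt_const t x).prodMk (hg.hasDerivAt.prodMk (hasDerivAt_id t))) hlev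
  rw [ContinuousLinearMap.apply_triple] at h
  rw [p3_eq_fderiv hL, p2_eq_fderiv hL]
  simpa [add_comm] using h

theorem implicit_deriv2_p11 {g : ℝ → ℝ} (hL : ContDiff ℝ 2 (uncurry3 L))
    (hg : Differentiable ℝ g) (hg' : DifferentiableAt ℝ (deriv g) x)
    (hlev : ∀ a, L a (g a) t = l) :
    p11 L x (g x) t + 2 * deriv g x * p12 L x (g x) t + deriv g x ^ 2 * p22 L x (g x) t
      + deriv (deriv g) x * p2 L x (g x) t = 0 := by
  have hF : Differentiable ℝ (uncurry3 L) := hL.differentiable two_ne_zero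
  have hF' : Differentiable ℝ (fderiv ℝ (uncurry3 L)) :=
    (hL.fderiv_right (m := 1) le_rfl).differentiable one_ne_zero
  have hsymm := hL.contDiffAt.isSymmSndFDerivAt (x := (x, g x, t)) (by simp)
  have h := fderiv_fderiv_add_fderiv_eq_zero_of_comp_eq_const (γ := fun a => (a, g a, t))
    (γ' := fun a => (1, deriv g a, 0)) hF (hF' _)
    (fun a => (hasDerivAt_id a).prodMk ((hg a).hasDerivAt.prodMk (hasDerivAt_const a t)))
    ((hasDerivAt_const x 1).prodMk (hg'.hasDerivAt.prodMk (hasDerivAt_const x 0))) hlev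
  simp only [ContinuousLinearMap.apply_triple _ 1 (deriv g x) 0,
    ContinuousLinearMap.apply_triple _ 0 (deriv (deriv g) x) 0, add_apply,
    smul_apply, smul_eq_mul, hsymm.eq (1, 0, 0) (0, 1, 0)] at h
  rw [p11_eq_fderiv_fderiv hF (hF' _), p12_eq_fderiv_fderiv hF (hF' _),
    p22_eq_fderiv_fderiv hF (hF' _), p2_eq_fderiv (hF _)]
  linear_combination h

end ImplicitDifferentiation

theorem hjb_of_implicit_derivatives {S c A B C X Y Z p q r : ℝ} (hB : B ≠ 0)
    (hx : A + p * B = 0) (ht : C + q * B = 0) (hxx : X + 2 * p * Y + p ^ 2 * Z + r * B = 0)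
    (hpde : C + S / 2 * X
      = S / (2 * c) * A ^ 2 / B + S * A * Y / B - S / 2 * A ^ 2 * Z / B ^ 2) :
    q + S / 2 * r + S / (2 * c) * p ^ 2 = 0 := by
  obtain rfl : A = -(p * B) := by linear_combination hx
  have hpde' : C + S / 2 * X = S / (2 * c) * p ^ 2 * B - S * p * Y - S / 2 * p ^ 2 * Z := by
    rw [hpde]; field_simp; ring
  apply mul_left_cancel₀ hB
  linear_combination ht + S / 2 * hxx - hpde'

theorem stmt_13_general
    (σ : ℝ → ℝ) (c : ℝ) (l : ℝ)
    (L : ℝ → ℝ → ℝ → ℝ)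
    (hL : ContDiff ℝ 2 (fun p : ℝ × ℝ × ℝ => L p.1 p.2.1 p.2.2))
    (hLv : ∀ x v s : ℝ, p2 L x v s < 0)
    (hPDE : ∀ x v s : ℝ,
      p3 L x v s + σ x ^ 2 / 2 * p11 L x v s
        = σ x ^ 2 / (2 * c) * (p1 L x v s) ^ 2 / p2 L x v s
          + σ x ^ 2 * p1 L x v s * p12 L x v s / p2 L x v s
          - σ x ^ 2 / 2 * (p1 L x v s) ^ 2 * p22 L x v s / (p2 L x v s) ^ 2)
    (v : ℝ → ℝ → ℝ)
    (hv : ContDiff ℝ 2 (fun p : ℝ × ℝ => v p.1 p.2))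
    (hlev : ∀ x s : ℝ, L x (v x s) s = l) :
    ∀ x s : ℝ,
      qS v x s + σ x ^ 2 / 2 * qXX v x s + σ x ^ 2 / (2 * c) * (qX v x s) ^ 2 = 0 := by
  intro x s
  have hF : ContDiff ℝ 2 (uncurry3 L) := hL
  have hF_diff : Differentiable ℝ (uncurry3 L) := hF.differentiable two_ne_zero
  have hv_fst : ContDiff ℝ 2 (fun a => v a s) := hv.comp (contDiff_id.prodMk contDiff_const)
  have hv_snd : ContDiff ℝ 2 (fun b => v x b) := hv.comp (contDiff_const.prodMk contDiff_id)
  exact hjb_of_implicit_derivatives (hLv x (v x s) s).ne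
    (implicit_deriv_p1 (hF_diff _) (hv_fst.differentiable two_ne_zero x) (hlev · s))
    (implicit_deriv_p3 (hF_diff _) (hv_snd.differentiable two_ne_zero s) (hlev x))
    (implicit_deriv2_p11 hF (hv_fst.differentiable two_ne_zero) (hv_fst.differentiable_deriv_two x)
      (hlev · s))
    (hPDE x (v x s) s)

/-- Key computation in the equivalence theorem `u = w`: if `L(x,v,s)` is `C²` with
`L_v < 0` and satisfies
`L_s + (σ²/2)L_{xx} = (σ²/(2c))L_x²/L_v + σ²L_xL_{xv}/L_v − (σ²/2)L_x²L_{vv}/L_v²`,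
and the `C²` function `v(x,s)` satisfies `L(x, v(x,s), s) = l` for all `(x,s)`, then
`v_s + (σ²/2)v_{xx} + (σ²/(2c))v_x² = 0` everywhere. -/
theorem stmt_13
    (σ : ℝ → ℝ) (c : ℝ) (hc : 0 < c) (l : ℝ)
    (L : ℝ → ℝ → ℝ → ℝ)
    (hL : ContDiff ℝ 2 (fun p : ℝ × ℝ × ℝ => L p.1 p.2.1 p.2.2))
    (hLv : ∀ x v s : ℝ, p2 L x v s < 0)
    (hPDE : ∀ x v s : ℝ,
      p3 L x v s + σ x ^ 2 / 2 * p11 L x v s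
        = σ x ^ 2 / (2 * c) * (p1 L x v s) ^ 2 / p2 L x v s
          + σ x ^ 2 * p1 L x v s * p12 L x v s / p2 L x v s
          - σ x ^ 2 / 2 * (p1 L x v s) ^ 2 * p22 L x v s / (p2 L x v s) ^ 2)
    (v : ℝ → ℝ → ℝ)
    (hv : ContDiff ℝ 2 (fun p : ℝ × ℝ => v p.1 p.2))
    (hlev : ∀ x s : ℝ, L x (v x s) s = l) :
    ∀ x s : ℝ,
      qS v x s + σ x ^ 2 / 2 * qXX v x s + σ x ^ 2 / (2 * c) * (qX v x s) ^ 2 = 0 :=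
  stmt_13_general σ c l L hL hLv hPDE v hv hlev
end

section
/- The range 𝓛 = {G(x,y) : (x,y) ∈ ℝ²} of G is an open subset of ℝ. (The paper's Remark that the set of attainable values l of the function L(·,·,T) is an open set.) -/
open Set

theorem isOpenMap_sub_mul_deriv {f : ℝ → ℝ} (hf : ContDiff ℝ 2 f)
    (hf' : ∀ z, 0 < deriv f z) (hf'' : ∀ z, deriv (deriv f) z ≤ 0) {k : ℝ} (hk : 0 ≤ k) :
    IsOpenMap (fun z => f z - k * deriv f z) := by
  have hderiv : ContDiff ℝ 1 (deriv f) := hf.deriv'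
  refine isOpenMap_of_hasStrictDerivAt (f' := fun z => deriv f z - k * deriv (deriv f) z)
    (fun z => ?_) (fun z => ?_)
  · exact (hf.contDiffAt.hasStrictDerivAt two_ne_zero).sub
      ((hderiv.contDiffAt.hasStrictDerivAt one_ne_zero).const_mul k)
  · nlinarith [hf' z, hf'' z]

theorem G_eq_sub_mul_deriv (UA UP : ℝ → ℝ) (c x y : ℝ) :
    G UA UP c x y = UP (x - Function.invFun UA y)
      - c / deriv UA (Function.invFun UA y) * deriv UP (x - Function.invFun UA y) := by
  rw [G, div_mul_eq_mul_div]

theorem stmt_17_general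
    (UA UP : ℝ → ℝ) (c : ℝ) (hc : 0 < c)
    (hUP : ContDiff ℝ 2 UP)
    (hUA' : ∀ z, 0 < deriv UA z)
    (hUP' : ∀ z, 0 < deriv UP z) (hUP'' : ∀ z, deriv (deriv UP) z ≤ 0) :
    IsOpen {z : ℝ | ∃ x y : ℝ, G UA UP c x y = z} := by
  set k : ℝ → ℝ := fun y => c / deriv UA (Function.invFun UA y)
  have hrange : {z : ℝ | ∃ x y : ℝ, G UA UP c x y = z}
      = ⋃ y, range (fun t => UP t - k y * deriv UP t) := by
    ext z
    simp only [mem_ofPred_eq, mem_iUnion, mem_range, G_eq_sub_mul_deriv]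
    constructor
    · rintro ⟨x, y, rfl⟩
      exact ⟨y, _, rfl⟩
    · rintro ⟨y, t, rfl⟩
      exact ⟨t + Function.invFun UA y, y, by simp only [add_sub_cancel_right, k]⟩
  rw [hrange]
  exact isOpen_iUnion fun y =>
    (isOpenMap_sub_mul_deriv hUP hUP' hUP'' (div_pos hc (hUA' _)).le).isOpen_range

/-- The range `𝓛 = {G(x,y) : (x,y) ∈ ℝ²}` of `G` is an open subset of `ℝ`. -/
theorem stmt_17
    (UA UP : ℝ → ℝ) (c : ℝ) (hc : 0 < c)
    (hUA : ContDiff ℝ 2 UA) (hUP : ContDiff ℝ 2 UP)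
    (hUA' : ∀ z, 0 < deriv UA z) (hUA'' : ∀ z, deriv (deriv UA) z ≤ 0)
    (hUP' : ∀ z, 0 < deriv UP z) (hUP'' : ∀ z, deriv (deriv UP) z ≤ 0)
    (hbij : Function.Bijective UA) :
    IsOpen {z : ℝ | ∃ x y : ℝ, G UA UP c x y = z} :=
  stmt_17_general UA UP c hc hUP hUA' hUP' hUP''
end
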